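/- arXiv:math/9705204 — 4 statements merged into one kernel-verified Lean document; each statement's English description precedes it below -/
import Mathlib

section
/- Let b be a real number and (a_n)_{n≥1} a sequence of complex numbers. Suppose that the partial sums S_N(t) = ∑_{n=1}^N a_n n^{-(b+it)} converge uniformly in t ∈ ℝ as N → ∞ (i.e., the Dirichlet series ∑_{n=1}^∞ a_n/n^s converges uniformly on the vertical line Re s = b). Then for every ε > 0, the series ∑_{n=1}^∞ |a_n| n^{-(b + 1/2 + ε)} converges; that is, the Dirichlet series converges absolutely at every s with Re s ≥ b + 1/2 + ε. (Consequently, the width of the strip of uniform but non-absolute convergence of a Dirichlet series is at most 1/2.) -/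
open Filter Finset

namespace DirichletAux

noncomputable section

variable (b : ℝ) (a : ℕ → ℂ)

def L (n : ℕ) : ℝ := Real.log (n + 1)

def g (n : ℕ) (t : ℝ) : ℂ := a (n + 1) * ((n + 1 : ℕ) : ℂ) ^ (-((b : ℂ) + t * Complex.I))

def A (m n : ℕ) : ℂ :=
  a (m + 1) * (starRingEnd ℂ) (a (n + 1)) * Complex.exp (-(b : ℂ) * (L m + L n))

def c (m n : ℕ) : ℂ := ((L n - L m : ℝ) : ℂ) * Complex.I

def B (m n : ℕ) : ℝ :=
  2 * (‖a (m + 1)‖ * ‖a (n + 1)‖ * Real.exp (-b * (L m + L n))) / |L n - L m|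

lemma B_nonneg (m n : ℕ) : 0 ≤ B b a m n := by
  unfold B; positivity

lemma B_diag (n : ℕ) : B b a n n = 0 := by
  unfold B; simp

lemma natCast_eq (n : ℕ) : ((n + 1 : ℕ) : ℂ) = (((n + 1 : ℕ) : ℝ) : ℂ) := by push_cast; ring

lemma g_eq (n : ℕ) (t : ℝ) :
    g b a n t = a (n + 1) * Complex.exp (-((b : ℂ) + t * Complex.I) * (L n : ℝ)) := by
  unfold g L
  rw [Complex.cpow_def_of_ne_zero (by exact_mod_cast (Nat.succ_ne_zero n))]
  rw [natCast_eq, ← Complex.ofReal_log (by positivity)]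
  push_cast
  ring_nf

lemma prod_eq (m n : ℕ) (t : ℝ) :
    g b a m t * (starRingEnd ℂ) (g b a n t)
      = A b a m n * Complex.exp (c m n * t) := by
  rw [g_eq, g_eq, map_mul, ← Complex.exp_conj]
  simp only [map_mul, map_neg, map_add, Complex.conj_ofReal, Complex.conj_I]
  unfold A c
  rw [mul_mul_mul_comm, ← Complex.exp_add]
  have heq : (-((b:ℂ) + (t:ℂ) * Complex.I) * ((L m : ℝ) : ℂ)
        + -((b:ℂ) + (t:ℂ) * -Complex.I) * ((L n : ℝ) : ℂ))
      = (-(b:ℂ) * (((L m : ℝ) : ℂ) + ((L n : ℝ) : ℂ)) + ((L n - L m : ℝ) : ℂ) * Complex.I * (t : ℂ)) := by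
    push_cast; ring
  rw [heq, Complex.exp_add, ← mul_assoc]

lemma cont_g (n : ℕ) : Continuous (fun t : ℝ => g b a n t) := by
  unfold g
  exact continuous_const.mul ((Continuous.const_cpow (by continuity)
    (Or.inl (by exact_mod_cast (Nat.succ_ne_zero n)))))

lemma intInt (m n : ℕ) (T : ℝ) :
    IntervalIntegrable (fun t : ℝ => g b a m t * (starRingEnd ℂ) (g b a n t))
      MeasureTheory.volume (-T) T :=
  ((cont_g b a m).mul (Complex.continuous_conj.comp (cont_g b a n))).intervalIntegrable _ _

lemma exp_neg_log (x : ℝ) (n : ℕ) : Real.exp (-x * L n) = ((n + 1 : ℕ) : ℝ) ^ (-x) := by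
  rw [Real.rpow_def_of_pos (by positivity), L]
  push_cast
  ring_nf

lemma J_diag (n : ℕ) (T : ℝ) :
    ∫ t in (-T)..T, g b a n t * (starRingEnd ℂ) (g b a n t)
      = (((2 * T) * (‖a (n + 1)‖ ^ 2 * ((n + 1 : ℕ) : ℝ) ^ (-(2 * b))) : ℝ) : ℂ) := by
  simp only [prod_eq]
  have hc : c n n = 0 := by simp [c]
  simp only [hc, zero_mul, Complex.exp_zero, mul_one]
  rw [intervalIntegral.integral_const, A, Complex.mul_conj]
  have h1 : Complex.exp (-(b : ℂ) * ((L n : ℝ) + (L n : ℝ)))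
      = ((((n + 1 : ℕ) : ℝ) ^ (-(2 * b)) : ℝ) : ℂ) := by
    rw [← exp_neg_log (2 * b) n, Complex.ofReal_exp]
    push_cast
    ring_nf
  rw [h1, Complex.real_smul, Complex.normSq_eq_norm_sq]
  norm_cast
  ring

lemma J_off (m n : ℕ) (hmn : m ≠ n) (T : ℝ) :
    ‖∫ t in (-T)..T, g b a m t * (starRingEnd ℂ) (g b a n t)‖ ≤ B b a m n := by
  have hL : L m ≠ L n := by
    intro hEq
    have h1 := Real.log_injOn_pos (Set.mem_Ioi.mpr (by positivity : (0:ℝ) < (m:ℝ) + 1))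
      (Set.mem_Ioi.mpr (by positivity : (0:ℝ) < (n:ℝ) + 1)) hEq
    exact hmn (Nat.cast_injective (by linarith : (m:ℝ) = n))
  have hc : c m n ≠ 0 := by
    simp only [c, Ne, mul_eq_zero, Complex.I_ne_zero, or_false, Complex.ofReal_eq_zero,
      sub_eq_zero]
    exact fun h => hL h.symm
  simp only [prod_eq]
  rw [intervalIntegral.integral_const_mul, integral_exp_mul_complex hc, norm_mul]
  have hA : ‖A b a m n‖ = ‖a (m + 1)‖ * ‖a (n + 1)‖ * Real.exp (-b * (L m + L n)) := by
    unfold A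
    rw [norm_mul, norm_mul, Complex.norm_exp]
    simp
  have hq : ‖(Complex.exp (c m n * T) - Complex.exp (c m n * (-T : ℝ))) / c m n‖
      ≤ 2 / |L n - L m| := by
    rw [norm_div]
    have hcn : ‖c m n‖ = |L n - L m| := by
      rw [c, norm_mul, Complex.norm_I,
        Complex.norm_real, Real.norm_eq_abs, mul_one]
    rw [hcn]
    gcongr
    calc ‖Complex.exp (c m n * T) - Complex.exp (c m n * (-T : ℝ))‖
        ≤ ‖Complex.exp (c m n * T)‖ + ‖Complex.exp (c m n * (-T : ℝ))‖ := norm_sub_le _ _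
      _ ≤ 2 := by
          have h1 : ∀ s : ℝ, ‖Complex.exp (c m n * s)‖ = 1 := by
            intro s
            rw [Complex.norm_exp]
            simp [c]
          rw [h1, h1]; norm_num
  calc ‖A b a m n‖ * ‖(Complex.exp (c m n * T) - Complex.exp (c m n * (-T : ℝ))) / c m n‖
      ≤ ‖A b a m n‖ * (2 / |L n - L m|) := mul_le_mul_of_nonneg_left hq (norm_nonneg _)
    _ = B b a m n := by rw [hA]; unfold B; ring

lemma key (C : ℝ) (hC : ∀ (N : ℕ) (t : ℝ), ‖∑ n ∈ range N, g b a n t‖ ≤ C) (N : ℕ) :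
    ∑ n ∈ range N, ‖a (n + 1)‖ ^ 2 * ((n + 1 : ℕ) : ℝ) ^ (-(2 * b)) ≤ C ^ 2 := by
  set D := ∑ n ∈ range N, ‖a (n + 1)‖ ^ 2 * ((n + 1 : ℕ) : ℝ) ^ (-(2 * b)) with hD
  set E := ∑ m ∈ range N, ∑ n ∈ range N, B b a m n with hE
  have hE0 : 0 ≤ E := sum_nonneg fun m _ => sum_nonneg fun n _ => B_nonneg b a m n
  have main : ∀ T : ℝ, 0 < T → 2 * T * D - E ≤ 2 * T * C ^ 2 := by
    intro T hT
    have hfcont : Continuous fun t : ℝ => ∑ n ∈ range N, g b a n t :=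
      continuous_finset_sum _ fun n _ => cont_g b a n
    have hint : IntervalIntegrable (fun t : ℝ => ‖∑ n ∈ range N, g b a n t‖ ^ 2)
        MeasureTheory.volume (-T) T := (hfcont.norm.pow 2).intervalIntegrable _ _
    have hupper : (∫ t in (-T)..T, ‖∑ n ∈ range N, g b a n t‖ ^ 2) ≤ 2 * T * C ^ 2 := by
      calc (∫ t in (-T)..T, ‖∑ n ∈ range N, g b a n t‖ ^ 2)
          ≤ ∫ _t in (-T)..T, C ^ 2 := by
            apply intervalIntegral.integral_mono_on (by linarith) hint intervalIntegrable_const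
            intro x _
            exact pow_le_pow_left₀ (norm_nonneg _) (hC N x) 2
        _ = 2 * T * C ^ 2 := by
            rw [intervalIntegral.integral_const, smul_eq_mul]; ring
    have hre : ∀ z : ℂ, ‖z‖ ^ 2 = (z * (starRingEnd ℂ) z).re := by
      intro z
      rw [Complex.mul_conj, Complex.ofReal_re, Complex.normSq_eq_norm_sq]
    have hProdInt : IntervalIntegrable
        (fun t : ℝ => (∑ m ∈ range N, g b a m t) * (starRingEnd ℂ) (∑ n ∈ range N, g b a n t))
        MeasureTheory.volume (-T) T :=
      (hfcont.mul (Complex.continuous_conj.comp hfcont)).intervalIntegrable _ _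
    have hexpand : (∫ t in (-T)..T, ‖∑ n ∈ range N, g b a n t‖ ^ 2)
        = ∑ m ∈ range N, ∑ n ∈ range N,
            (∫ t in (-T)..T, g b a m t * (starRingEnd ℂ) (g b a n t)).re := by
      calc (∫ t in (-T)..T, ‖∑ n ∈ range N, g b a n t‖ ^ 2)
          = ∫ t in (-T)..T, Complex.reCLM
              ((∑ m ∈ range N, g b a m t) * (starRingEnd ℂ) (∑ n ∈ range N, g b a n t)) := by
            exact intervalIntegral.integral_congr fun t _ => hre _
        _ = Complex.reCLM (∫ t in (-T)..T,
              (∑ m ∈ range N, g b a m t) * (starRingEnd ℂ) (∑ n ∈ range N, g b a n t)) :=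
            ContinuousLinearMap.intervalIntegral_comp_comm _ hProdInt
        _ = ∑ m ∈ range N, ∑ n ∈ range N,
            (∫ t in (-T)..T, g b a m t * (starRingEnd ℂ) (g b a n t)).re := by
            have h1 : ∀ t : ℝ,
                (∑ m ∈ range N, g b a m t) * (starRingEnd ℂ) (∑ n ∈ range N, g b a n t)
                = ∑ m ∈ range N, ∑ n ∈ range N, g b a m t * (starRingEnd ℂ) (g b a n t) := by
              intro t
              rw [map_sum, Finset.sum_mul_sum]
            rw [intervalIntegral.integral_congr (fun t _ => h1 t)]
            have hInt2 : ∀ m ∈ range N, IntervalIntegrable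
                (fun t : ℝ => ∑ n ∈ range N, g b a m t * (starRingEnd ℂ) (g b a n t))
                MeasureTheory.volume (-T) T := by
              intro m _
              apply Continuous.intervalIntegrable
              exact continuous_finset_sum _ fun n _ =>
                ((cont_g b a m).mul (Complex.continuous_conj.comp (cont_g b a n)))
            rw [intervalIntegral.integral_finset_sum hInt2]
            rw [Complex.reCLM_apply, Complex.re_sum]
            refine Finset.sum_congr rfl fun m _ => ?_
            rw [intervalIntegral.integral_finset_sum (fun n _ => intInt b a m n T),
              Complex.re_sum]
    have hlow : 2 * T * D - E ≤ ∑ m ∈ range N, ∑ n ∈ range N,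
        (∫ t in (-T)..T, g b a m t * (starRingEnd ℂ) (g b a n t)).re := by
      have step : ∀ m ∈ range N,
          2 * T * (‖a (m + 1)‖ ^ 2 * ((m + 1 : ℕ) : ℝ) ^ (-(2 * b))) - ∑ n ∈ range N, B b a m n
            ≤ ∑ n ∈ range N, (∫ t in (-T)..T, g b a m t * (starRingEnd ℂ) (g b a n t)).re := by
        intro m hm
        have h2 : ∑ n ∈ range N,
            ((if m = n then 2 * T * (‖a (n + 1)‖ ^ 2 * ((n + 1 : ℕ) : ℝ) ^ (-(2 * b))) + B b a m n
              else 0) - B b a m n)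
            ≤ ∑ n ∈ range N, (∫ t in (-T)..T, g b a m t * (starRingEnd ℂ) (g b a n t)).re := by
          apply Finset.sum_le_sum
          intro n _
          by_cases hmn : m = n
          · subst hmn
            rw [if_pos rfl, J_diag b a m T, Complex.ofReal_re]
            linarith
          · simp only [if_neg hmn, zero_sub]
            have h3 := J_off b a m n hmn T
            have h4 := (abs_le.mp
              (Complex.abs_re_le_norm (∫ t in (-T)..T, g b a m t * (starRingEnd ℂ) (g b a n t)))).1
            linarith
        calc 2 * T * (‖a (m + 1)‖ ^ 2 * ((m + 1 : ℕ) : ℝ) ^ (-(2 * b))) - ∑ n ∈ range N, B b a m n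
            = ∑ n ∈ range N,
              ((if m = n then 2 * T * (‖a (n + 1)‖ ^ 2 * ((n + 1 : ℕ) : ℝ) ^ (-(2 * b))) + B b a m n
                else 0) - B b a m n) := by
              rw [Finset.sum_sub_distrib, Finset.sum_ite_eq, if_pos hm, B_diag]
              ring
          _ ≤ _ := h2
      calc 2 * T * D - E
          = ∑ m ∈ range N, (2 * T * (‖a (m + 1)‖ ^ 2 * ((m + 1 : ℕ) : ℝ) ^ (-(2 * b)))
              - ∑ n ∈ range N, B b a m n) := by
            rw [Finset.sum_sub_distrib, ← Finset.mul_sum, hD, hE]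
        _ ≤ _ := Finset.sum_le_sum step
    linarith [hlow.trans (hexpand ▸ hupper)]
  apply le_of_forall_pos_le_add
  intro δ hδ
  set T := max 1 (E / (2 * δ)) with hTdef
  have h1 : (1:ℝ) ≤ T := le_max_left _ _
  have h2 : E / (2 * δ) ≤ T := le_max_right _ _
  have hT : 0 < T := lt_of_lt_of_le one_pos h1
  have hmain := main T hT
  have hEδ : E ≤ 2 * T * δ := by
    rw [div_le_iff₀ (by positivity)] at h2
    linarith
  nlinarith [hmain, hEδ, hT]

end

end DirichletAux

open DirichletAux in
/-- If the Dirichlet series `∑ aₙ/nˢ` converges uniformly on the vertical line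
`Re s = b`, then for every `ε > 0` it converges absolutely at every `s` with
`Re s ≥ b + 1/2 + ε`. -/
theorem dirichlet_uniform_line_implies_abs_conv (b : ℝ) (a : ℕ → ℂ)
    (h : ∃ S : ℝ → ℂ,
      TendstoUniformly
        (fun (N : ℕ) (t : ℝ) =>
          ∑ n ∈ Finset.range N, a (n + 1) * ((n + 1 : ℕ) : ℂ) ^ (-((b : ℂ) + t * Complex.I)))
        S atTop) :
    ∀ ε : ℝ, 0 < ε →
      Summable (fun n : ℕ => ‖a (n + 1)‖ * ((n + 1 : ℕ) : ℝ) ^ (-(b + 1 / 2 + ε))) := by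
  obtain ⟨S, hS⟩ := h
  rw [Metric.tendstoUniformly_iff] at hS
  obtain ⟨N₀, hN₀⟩ := Filter.eventually_atTop.mp (hS 1 one_pos)
  have hgnorm : ∀ (n : ℕ) (t : ℝ), ‖g b a n t‖ = ‖a (n + 1)‖ * ((n + 1 : ℕ) : ℝ) ^ (-b) := by
    intro n t
    have hb : ‖((((n + 1 : ℕ) : ℝ)) : ℂ) ^ (-((b : ℂ) + t * Complex.I))‖
        = ((n + 1 : ℕ) : ℝ) ^ (-b) := by
      rw [Complex.norm_cpow_eq_rpow_re_of_pos (by positivity)]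
      congr 1
      simp
    rw [g, norm_mul, natCast_eq, hb]
  set M := ∑ n ∈ range N₀, ‖a (n + 1)‖ * ((n + 1 : ℕ) : ℝ) ^ (-b) with hM
  have hpartial : ∀ (K : ℕ), K ≤ N₀ → ∀ t : ℝ, ‖∑ n ∈ range K, g b a n t‖ ≤ M := by
    intro K hK t
    calc ‖∑ n ∈ range K, g b a n t‖ ≤ ∑ n ∈ range K, ‖g b a n t‖ := norm_sum_le _ _
      _ = ∑ n ∈ range K, ‖a (n + 1)‖ * ((n + 1 : ℕ) : ℝ) ^ (-b) :=
          Finset.sum_congr rfl fun n _ => hgnorm n t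
      _ ≤ M := Finset.sum_le_sum_of_subset_of_nonneg
          (Finset.range_subset_range.mpr hK) (fun i _ _ => by positivity)
  have hC : ∀ (N : ℕ) (t : ℝ), ‖∑ n ∈ range N, g b a n t‖ ≤ M + 2 := by
    intro N t
    rcases le_or_gt N N₀ with hN | hN
    · linarith [hpartial N hN t]
    · have hd1 : dist (S t) (∑ n ∈ range N, g b a n t) < 1 := hN₀ N hN.le t
      have hd2 : dist (S t) (∑ n ∈ range N₀, g b a n t) < 1 := hN₀ N₀ le_rfl t
      have hsplit : (∑ n ∈ range N, g b a n t)
          = ((∑ n ∈ range N, g b a n t) - S t) + (S t - ∑ n ∈ range N₀, g b a n t)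
            + ∑ n ∈ range N₀, g b a n t := by ring
      rw [hsplit]
      refine norm_add₃_le.trans ?_
      rw [← dist_eq_norm', ← dist_eq_norm]
      linarith [hpartial N₀ le_rfl t]
  have hd : Summable (fun n : ℕ => ‖a (n + 1)‖ ^ 2 * ((n + 1 : ℕ) : ℝ) ^ (-(2 * b))) :=
    summable_of_sum_range_le (fun n => by positivity) (key b a (M + 2) hC)
  intro ε hε
  have hv : Summable (fun n : ℕ => ((n + 1 : ℕ) : ℝ) ^ (-(1 + 2 * ε))) := by
    have h1 := Real.summable_nat_rpow.mpr (by linarith : -(1 + 2 * ε) < -1)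
    exact (summable_nat_add_iff 1).mpr h1
  apply Summable.of_nonneg_of_le (fun n => by positivity) ?_ ((hd.add hv).div_const 2)
  intro n
  set x := ((n + 1 : ℕ) : ℝ) with hx
  have hxpos : (0:ℝ) < x := by positivity
  have hrw : ‖a (n + 1)‖ * x ^ (-(b + 1 / 2 + ε)) = (‖a (n + 1)‖ * x ^ (-b)) * x ^ (-(1/2 + ε)) := by
    rw [show -(b + 1/2 + ε) = -b + -(1/2 + ε) by ring, Real.rpow_add hxpos, ← mul_assoc]
  have hu2 : (‖a (n + 1)‖ * x ^ (-b)) ^ 2 = ‖a (n + 1)‖ ^ 2 * x ^ (-(2 * b)) := by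
    rw [mul_pow, sq (x ^ (-b)), ← Real.rpow_add hxpos, show -b + -b = -(2 * b) by ring]
  have hv2 : (x ^ (-(1/2 + ε))) ^ 2 = x ^ (-(1 + 2 * ε)) := by
    rw [sq, ← Real.rpow_add hxpos, show -(1/2 + ε) + -(1/2 + ε) = -(1 + 2 * ε) by ring]
  rw [hrw]
  nlinarith [sq_nonneg (‖a (n + 1)‖ * x ^ (-b) - x ^ (-(1/2 + ε))), hu2, hv2]
end

section
/- Let b be a real number, M a positive real number, and (a_n)_{n≥1} a sequence of complex numbers. If |∑_{n=1}^N a_n n^{-(b+it)}| ≤ M for every positive integer N and every real number t (i.e., the partial sums of the Dirichlet series are uniformly bounded by M on the vertical line Re s = b), then ∑_{n=1}^∞ |a_n|² n^{-2b} ≤ M². -/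
open Filter Finset

-- Bound on oscillatory integral
lemma Kbound (θ : ℝ) (hθ : θ ≠ 0) (T : ℝ) :
    ‖∫ t in (-T)..T, Complex.exp ((θ : ℂ) * Complex.I * t)‖ ≤ 2 / |θ| := by
  have hc : (θ : ℂ) * Complex.I ≠ 0 := by
    simp [Complex.ofReal_eq_zero, hθ, Complex.I_ne_zero]
  rw [integral_exp_mul_complex hc, norm_div]
  have h1 : ∀ z : ℂ, z.re = 0 → ‖Complex.exp z‖ = 1 := by
    intro z hz
    rw [Complex.norm_exp, hz, Real.exp_zero]
  have h2 : ‖(θ : ℂ) * Complex.I‖ = |θ| := by simp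
  rw [h2]
  have e1 : ‖Complex.exp ((θ:ℂ)*Complex.I*(T:ℝ))‖ = 1 := h1 _ (by simp)
  have e2 : ‖Complex.exp ((θ:ℂ)*Complex.I*((-T:ℝ):ℂ))‖ = 1 := h1 _ (by simp)
  have h3 : ‖Complex.exp ((θ:ℂ)*Complex.I*(T:ℝ)) - Complex.exp ((θ:ℂ)*Complex.I*((-T:ℝ):ℂ))‖ ≤ 2 := by
    calc ‖Complex.exp ((θ:ℂ)*Complex.I*(T:ℝ)) - Complex.exp ((θ:ℂ)*Complex.I*((-T:ℝ):ℂ))‖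
        ≤ ‖Complex.exp ((θ:ℂ)*Complex.I*(T:ℝ))‖ + ‖Complex.exp ((θ:ℂ)*Complex.I*((-T:ℝ):ℂ))‖ :=
          norm_sub_le _ _
      _ = 2 := by rw [e1, e2]; norm_num
  exact div_le_div_of_nonneg_right h3 (abs_nonneg θ)

lemma mean_value (N : ℕ) (c : ℕ → ℂ) (L : ℕ → ℝ)
    (hL : ∀ m ∈ Finset.range N, ∀ n ∈ Finset.range N, L m = L n → m = n)
    (M : ℝ) (hM : 0 ≤ M)
    (hbound : ∀ t : ℝ, ‖∑ n ∈ Finset.range N, c n * Complex.exp (-(t * Complex.I) * L n)‖ ≤ M) :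
    ∑ n ∈ Finset.range N, ‖c n‖ ^ 2 ≤ M ^ 2 := by
  set f : ℝ → ℂ := fun t => ∑ n ∈ Finset.range N, c n * Complex.exp (-((t:ℂ) * Complex.I) * (L n : ℝ)) with hf
  have hfc : Continuous f := by
    apply continuous_finset_sum
    intro n _
    fun_prop
  set S : ℝ := ∑ n ∈ Finset.range N, ‖c n‖ ^ 2 with hS
  set C : ℝ := ∑ m ∈ Finset.range N, ∑ n ∈ (Finset.range N).erase m,
      ‖c m‖ * ‖c n‖ * (2 / |L n - L m|) with hC
  have hC0 : 0 ≤ C := by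
    apply Finset.sum_nonneg; intro m _
    apply Finset.sum_nonneg; intro n _
    positivity
  -- pointwise expansion
  have hpair : ∀ (m n : ℕ) (t : ℝ),
      (c m * Complex.exp (-((t:ℂ) * Complex.I) * (L m : ℝ))) *
        (starRingEnd ℂ) (c n * Complex.exp (-((t:ℂ) * Complex.I) * (L n : ℝ)))
      = c m * (starRingEnd ℂ) (c n) * Complex.exp (((L n - L m : ℝ) : ℂ) * Complex.I * t) := by
    intro m n t
    rw [map_mul, ← Complex.exp_conj, mul_mul_mul_comm, ← Complex.exp_add]
    congr 1
    simp only [map_neg, map_mul, Complex.conj_I, Complex.conj_ofReal]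
    push_cast
    ring
  have hexpand : ∀ t : ℝ, ((Complex.normSq (f t) : ℝ) : ℂ)
      = ∑ m ∈ Finset.range N, ∑ n ∈ Finset.range N,
          c m * (starRingEnd ℂ) (c n) * Complex.exp (((L n - L m : ℝ) : ℂ) * Complex.I * t) := by
    intro t
    rw [← Complex.mul_conj, hf]
    simp only [map_sum, Finset.sum_mul_sum]
    exact Finset.sum_congr rfl fun m _ => Finset.sum_congr rfl fun n _ => hpair m n t
  -- the integral, expanded
  have hint : ∀ T : ℝ, ((∫ t in (-T)..T, Complex.normSq (f t) : ℝ) : ℂ)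
      = ∑ m ∈ Finset.range N, ∑ n ∈ Finset.range N,
          c m * (starRingEnd ℂ) (c n) *
            ∫ t in (-T)..T, Complex.exp (((L n - L m : ℝ) : ℂ) * Complex.I * t) := by
    intro T
    rw [← intervalIntegral.integral_ofReal]
    rw [intervalIntegral.integral_congr (g := fun t => ∑ m ∈ Finset.range N, ∑ n ∈ Finset.range N,
          c m * (starRingEnd ℂ) (c n) * Complex.exp (((L n - L m : ℝ) : ℂ) * Complex.I * t))
        (fun t _ => hexpand t)]
    rw [intervalIntegral.integral_finset_sum]
    · refine Finset.sum_congr rfl fun m _ => ?_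
      rw [intervalIntegral.integral_finset_sum]
      · exact Finset.sum_congr rfl fun n _ => intervalIntegral.integral_const_mul _ _
      · intro n _
        exact (Continuous.intervalIntegrable (by fun_prop) _ _)
    · intro m _
      apply Continuous.intervalIntegrable
      apply continuous_finset_sum
      intro n _
      fun_prop
  -- split diagonal
  have hdiag : ∀ T : ℝ, ((∫ t in (-T)..T, Complex.normSq (f t) : ℝ) : ℂ)
      = ((2 * T * S : ℝ) : ℂ) + ∑ m ∈ Finset.range N, ∑ n ∈ (Finset.range N).erase m,
          c m * (starRingEnd ℂ) (c n) *
            ∫ t in (-T)..T, Complex.exp (((L n - L m : ℝ) : ℂ) * Complex.I * t) := by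
    intro T
    rw [hint T]
    have : ∀ m ∈ Finset.range N,
        (∑ n ∈ Finset.range N, c m * (starRingEnd ℂ) (c n) *
            ∫ t in (-T)..T, Complex.exp (((L n - L m : ℝ) : ℂ) * Complex.I * t))
        = ((2 * T * ‖c m‖ ^ 2 : ℝ) : ℂ) + ∑ n ∈ (Finset.range N).erase m,
            c m * (starRingEnd ℂ) (c n) *
              ∫ t in (-T)..T, Complex.exp (((L n - L m : ℝ) : ℂ) * Complex.I * t) := by
      intro m hm
      rw [← Finset.add_sum_erase _ _ hm]
      congr 1
      have h0 : ((L m - L m : ℝ) : ℂ) = 0 := by push_cast; ring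
      rw [h0]
      simp only [zero_mul, Complex.exp_zero]
      rw [intervalIntegral.integral_const, Complex.mul_conj, Complex.normSq_eq_norm_sq,
        Complex.real_smul]
      push_cast
      ring
    rw [Finset.sum_congr rfl this, Finset.sum_add_distrib]
    congr 1
    rw [hS]
    push_cast
    rw [Finset.mul_sum]
  -- bound the error term
  have herr : ∀ T : ℝ, ‖∑ m ∈ Finset.range N, ∑ n ∈ (Finset.range N).erase m,
          c m * (starRingEnd ℂ) (c n) *
            ∫ t in (-T)..T, Complex.exp (((L n - L m : ℝ) : ℂ) * Complex.I * t)‖ ≤ C := by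
    intro T
    refine (norm_sum_le _ _).trans ?_
    rw [hC]
    refine Finset.sum_le_sum fun m hm => ?_
    refine (norm_sum_le _ _).trans ?_
    refine Finset.sum_le_sum fun n hn => ?_
    rw [norm_mul, norm_mul]
    have hne : L n - L m ≠ 0 := by
      intro hzero
      have : L m = L n := by linarith [sub_eq_zero.mp hzero]
      exact (Finset.ne_of_mem_erase hn) (hL n (Finset.mem_of_mem_erase hn) m hm this.symm)
    have := Kbound (L n - L m) hne T
    calc ‖c m‖ * ‖(starRingEnd ℂ) (c n)‖ *
            ‖∫ t in (-T)..T, Complex.exp (((L n - L m : ℝ) : ℂ) * Complex.I * t)‖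
        ≤ ‖c m‖ * ‖(starRingEnd ℂ) (c n)‖ * (2 / |L n - L m|) := by
          apply mul_le_mul_of_nonneg_left this
          positivity
      _ = ‖c m‖ * ‖c n‖ * (2 / |L n - L m|) := by rw [RCLike.norm_conj]
  -- upper bound on integral
  have hJB : ∀ T : ℝ, 0 ≤ T → (∫ t in (-T)..T, Complex.normSq (f t)) ≤ 2 * T * M ^ 2 := by
    intro T hT
    have hconst : (∫ _t in (-T)..T, (M ^ 2 : ℝ)) = 2 * T * M ^ 2 := by
      rw [intervalIntegral.integral_const, smul_eq_mul]
      ring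
    rw [← hconst]
    apply intervalIntegral.integral_mono_on (by linarith)
    · exact Continuous.intervalIntegrable (Complex.continuous_normSq.comp hfc) _ _
    · exact intervalIntegrable_const
    · intro t _
      have hb := hbound t
      have hfeq : Complex.normSq (f t) = ‖f t‖ ^ 2 := by
        rw [Complex.normSq_eq_norm_sq]
      rw [hfeq]
      have hfb : ‖f t‖ ≤ M := hb
      nlinarith [norm_nonneg (f t)]
  -- combine: S ≤ M^2 + C/(2T)
  have hcomb : ∀ T : ℝ, 0 < T → 2 * T * S ≤ 2 * T * M ^ 2 + C := by
    intro T hT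
    have h1 := hdiag T
    have h2 := herr T
    set E := ∑ m ∈ Finset.range N, ∑ n ∈ (Finset.range N).erase m,
          c m * (starRingEnd ℂ) (c n) *
            ∫ t in (-T)..T, Complex.exp (((L n - L m : ℝ) : ℂ) * Complex.I * t) with hE
    have hre : (∫ t in (-T)..T, Complex.normSq (f t)) = 2 * T * S + E.re := by
      have := congrArg Complex.re h1
      simpa using this
    have hEre : -C ≤ E.re := by
      have := abs_le.mp ((Complex.abs_re_le_norm E).trans_eq rfl)
      have h3 : |E.re| ≤ C := le_trans (Complex.abs_re_le_norm E) h2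
      linarith [abs_le.mp h3]
    have h4 := hJB T hT.le
    linarith
  -- conclude
  refine le_of_forall_pos_le_add fun ε hε => ?_
  set T : ℝ := max 1 (C / (2 * ε)) with hT
  have hT1 : (1:ℝ) ≤ T := le_max_left _ _
  have hT0 : 0 < T := by linarith
  have h5 := hcomb T hT0
  have h6 : C / (2 * T) ≤ ε := by
    rw [div_le_iff₀ (by linarith)]
    have : C / (2 * ε) ≤ T := le_max_right _ _
    calc C = (C / (2 * ε)) * (2 * ε) := by field_simp
      _ ≤ T * (2 * ε) := by apply mul_le_mul_of_nonneg_right this; linarith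
      _ = ε * (2 * T) := by ring
  have h2T : (0:ℝ) < 2 * T := by linarith
  have h7 : S ≤ M ^ 2 + C / (2 * T) := by
    have heq : 2 * T * (M ^ 2 + C / (2 * T)) = 2 * T * M ^ 2 + C := by field_simp
    have hx : 2 * T * S ≤ 2 * T * (M ^ 2 + C / (2 * T)) := by rw [heq]; exact h5
    exact le_of_mul_le_mul_left hx h2T
  linarith

lemma cpow_split (b t : ℝ) (n : ℕ) :
    ((n + 1 : ℕ) : ℂ) ^ (-((b : ℂ) + t * Complex.I))
      = ((Real.exp (-b * Real.log ((n + 1 : ℕ) : ℝ)) : ℝ) : ℂ) *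
        Complex.exp (-((t:ℂ) * Complex.I) * (Real.log ((n + 1 : ℕ) : ℝ) : ℝ)) := by
  have h0 : ((n + 1 : ℕ) : ℂ) ≠ 0 := Nat.cast_ne_zero.mpr n.succ_ne_zero
  rw [Complex.cpow_def_of_ne_zero h0]
  have hlog : Complex.log ((n + 1 : ℕ) : ℂ) = ((Real.log ((n + 1 : ℕ) : ℝ) : ℝ) : ℂ) := by
    rw [← Complex.ofReal_natCast, ← Complex.ofReal_log (by positivity)]
  rw [hlog, Complex.ofReal_exp, ← Complex.exp_add]
  congr 1
  push_cast
  ring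


/-- If the partial sums of the Dirichlet series `∑ aₙ/nˢ` are uniformly bounded by `M`
on the vertical line `Re s = b`, then `∑ |aₙ|² n^(−2b) ≤ M²`. -/
theorem dirichlet_bounded_partial_sums_sq_sum_le (b : ℝ) (M : ℝ) (hM : 0 < M) (a : ℕ → ℂ)
    (h : ∀ (N : ℕ) (t : ℝ),
      ‖∑ n ∈ Finset.range N, a (n + 1) * ((n + 1 : ℕ) : ℂ) ^ (-((b : ℂ) + t * Complex.I))‖ ≤ M) :
    Summable (fun n : ℕ => ‖a (n + 1)‖ ^ 2 * ((n + 1 : ℕ) : ℝ) ^ (-(2 * b))) ∧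
      ∑' n : ℕ, ‖a (n + 1)‖ ^ 2 * ((n + 1 : ℕ) : ℝ) ^ (-(2 * b)) ≤ M ^ 2 := by
  set L : ℕ → ℝ := fun n => Real.log ((n + 1 : ℕ) : ℝ) with hLdef
  set c : ℕ → ℂ := fun n => a (n + 1) * ((Real.exp (-b * L n) : ℝ) : ℂ) with hcdef
  have hnormc : ∀ n : ℕ, ‖c n‖ ^ 2 = ‖a (n + 1)‖ ^ 2 * ((n + 1 : ℕ) : ℝ) ^ (-(2 * b)) := by
    intro n
    rw [hcdef]
    simp only [norm_mul, Complex.norm_real, Real.norm_eq_abs, abs_of_pos (Real.exp_pos _)]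
    rw [mul_pow]
    congr 1
    rw [Real.rpow_def_of_pos (by positivity)]
    rw [sq, ← Real.exp_add, hLdef]
    ring_nf
  have key : ∀ N : ℕ,
      ∑ n ∈ Finset.range N, ‖a (n + 1)‖ ^ 2 * ((n + 1 : ℕ) : ℝ) ^ (-(2 * b)) ≤ M ^ 2 := by
    intro N
    have hLinj : ∀ m ∈ Finset.range N, ∀ n ∈ Finset.range N, L m = L n → m = n := by
      intro m _ n _ hmn
      have hmn' : Real.log ((m + 1 : ℕ) : ℝ) = Real.log ((n + 1 : ℕ) : ℝ) := hmn
      have h1 : ((m + 1 : ℕ) : ℝ) = ((n + 1 : ℕ) : ℝ) := by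
        have hc := congrArg Real.exp hmn'
        rwa [Real.exp_log (by positivity), Real.exp_log (by positivity)] at hc
      have : m + 1 = n + 1 := by exact_mod_cast h1
      omega
    have hbound : ∀ t : ℝ,
        ‖∑ n ∈ Finset.range N, c n * Complex.exp (-((t:ℂ) * Complex.I) * (L n : ℝ))‖ ≤ M := by
      intro t
      have := h N t
      convert this using 3 with n hn
      rw [hcdef, cpow_split b t n]
      ring
    have := mean_value N c L hLinj M hM.le hbound
    calc ∑ n ∈ Finset.range N, ‖a (n + 1)‖ ^ 2 * ((n + 1 : ℕ) : ℝ) ^ (-(2 * b))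
        = ∑ n ∈ Finset.range N, ‖c n‖ ^ 2 := by
          exact Finset.sum_congr rfl fun n _ => (hnormc n).symm
      _ ≤ M ^ 2 := this
  have hnonneg : ∀ n : ℕ, 0 ≤ ‖a (n + 1)‖ ^ 2 * ((n + 1 : ℕ) : ℝ) ^ (-(2 * b)) := by
    intro n; positivity
  have hsum := summable_of_sum_range_le hnonneg key
  exact ⟨hsum, Summable.tsum_le_of_sum_range_le hsum key⟩
end

section
/- For every complex number s with Re s > 0 and s ≠ 1, the sum of the (conditionally convergent) series ∑_{n=1}^∞ (-1)^{n+1} n^{-s} equals (1 - 2^{1-s}) · ζ(s), where ζ denotes the analytic continuation of the Riemann zeta function. That is, the function (1 - 2^{1-s})^{-1} ∑_{n=1}^∞ (-1)^{n+1} n^{-s} extends the definition of the ζ-function from the half-plane Re s > 1 to the half-plane Re s > 0. -/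
open Filter Finset

set_option maxHeartbeats 1000000

open Complex in
/-- The alternating zeta sum in paired form. -/
noncomputable def etaAux (s : ℂ) : ℂ :=
  ∑' k : ℕ, (((2 * k + 1 : ℕ) : ℂ) ^ (-s) - ((2 * k + 2 : ℕ) : ℂ) ^ (-s))

open Complex in
lemma eta_term_bound {s : ℂ} (hs : 0 < s.re) {a : ℝ} (ha : 1 ≤ a) :
    ‖((a : ℂ)) ^ (-s) - ((a + 1 : ℝ) : ℂ) ^ (-s)‖ ≤ ‖s‖ * a ^ (-s.re - 1) := by
  have hs0 : s ≠ 0 := fun h => by simp [h] at hs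
  have ha0 : (0 : ℝ) < a := lt_of_lt_of_le one_pos ha
  have hd : ∀ x ∈ Set.Icc a (a + 1), HasDerivWithinAt (fun y : ℝ => ((y : ℂ)) ^ (-s))
      ((-s) * ((x : ℂ)) ^ (-s - 1)) (Set.Icc a (a + 1)) x := by
    intro x hx
    have hx0 : x ≠ 0 := by nlinarith [hx.1]
    have h1 : (-s - 1 : ℂ) ≠ -1 := by
      intro h; apply hs0; linear_combination -h
    have H := hasDerivAt_ofReal_cpow_const' hx0 h1
    simp only [sub_add_cancel] at H
    have H2 := H.const_mul (-s)
    have he : (fun y : ℝ => (-s) * ((y : ℂ) ^ (-s) / (-s))) = fun y : ℝ => (y : ℂ) ^ (-s) := by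
      funext y
      rw [mul_div_cancel₀ _ (neg_ne_zero.mpr hs0)]
    rw [he] at H2
    exact H2.hasDerivWithinAt
  have hb : ∀ x ∈ Set.Icc a (a + 1), ‖(-s) * ((x : ℂ)) ^ (-s - 1)‖ ≤ ‖s‖ * a ^ (-s.re - 1) := by
    intro x hx
    have hx0 : (0 : ℝ) < x := lt_of_lt_of_le ha0 hx.1
    rw [norm_mul, norm_neg]
    gcongr
    rw [Complex.norm_cpow_eq_rpow_re_of_pos hx0]
    have e : (-s - 1 : ℂ).re = -s.re - 1 := by simp
    rw [e]
    exact Real.rpow_le_rpow_of_nonpos ha0 hx.1 (by linarith)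
  have key := Convex.norm_image_sub_le_of_norm_hasDerivWithin_le hd hb (convex_Icc _ _)
    (Set.mem_Icc.2 ⟨le_refl a, by linarith⟩) (Set.mem_Icc.2 ⟨by linarith, le_refl _⟩)
  calc ‖((a : ℂ)) ^ (-s) - ((a + 1 : ℝ) : ℂ) ^ (-s)‖
      = ‖((a + 1 : ℝ) : ℂ) ^ (-s) - ((a : ℂ)) ^ (-s)‖ := (norm_sub_rev _ _)
    _ ≤ ‖s‖ * a ^ (-s.re - 1) * ‖(a + 1 : ℝ) - a‖ := key
    _ = ‖s‖ * a ^ (-s.re - 1) := by simp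

open Complex in
lemma eta_term_bound' {s : ℂ} (hs : 0 < s.re) (k : ℕ) :
    ‖((2 * k + 1 : ℕ) : ℂ) ^ (-s) - ((2 * k + 2 : ℕ) : ℂ) ^ (-s)‖
      ≤ ‖s‖ * (2 * (k : ℝ) + 1) ^ (-s.re - 1) := by
  have e1 : ((2 * k + 1 : ℕ) : ℂ) = (((2 * (k : ℝ) + 1 : ℝ)) : ℂ) := by push_cast; ring
  have e2 : ((2 * k + 2 : ℕ) : ℂ) = (((2 * (k : ℝ) + 1 + 1 : ℝ)) : ℂ) := by push_cast; ring
  rw [e1, e2]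
  have hk : (0 : ℝ) ≤ (k : ℝ) := Nat.cast_nonneg k
  exact eta_term_bound hs (by linarith)

lemma summable_bound {c : ℝ} (hc : 0 < c) :
    Summable (fun k : ℕ => (2 * (k : ℝ) + 1) ^ (-c - 1)) := by
  have h1 : Summable (fun k : ℕ => ((k : ℝ) + 1) ^ (-c - 1)) := by
    have h0 : Summable (fun n : ℕ => ((n : ℝ)) ^ (-c - 1)) :=
      (Real.summable_nat_rpow (p := -c - 1)).mpr (by linarith)
    have h2 := (summable_nat_add_iff 1).mpr h0
    refine h2.congr fun k => ?_
    norm_num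
  apply h1.of_nonneg_of_le (fun k => by positivity)
  intro k
  exact Real.rpow_le_rpow_of_nonpos (by positivity) (by linarith) (by linarith)

lemma tendsto_even_odd {u : ℕ → ℂ} {l : ℂ}
    (he : Tendsto (fun k => u (2 * k)) atTop (nhds l))
    (ho : Tendsto (fun k => u (2 * k + 1)) atTop (nhds l)) :
    Tendsto u atTop (nhds l) := by
  rw [Metric.tendsto_atTop] at he ho ⊢
  intro ε hε
  obtain ⟨N₁, h₁⟩ := he ε hε
  obtain ⟨N₂, h₂⟩ := ho ε hε
  refine ⟨2 * (max N₁ N₂) + 2, fun n hn => ?_⟩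
  rcases Nat.even_or_odd n with ⟨k, hk⟩ | ⟨k, hk⟩
  · have hkn : n = 2 * k := by omega
    have hN : N₁ ≤ k := by omega
    rw [hkn]; exact h₁ k hN
  · have hN : N₂ ≤ k := by omega
    rw [hk]; exact h₂ k hN

lemma even_partial (s : ℂ) (N : ℕ) :
    ∑ n ∈ Finset.range (2 * N), (-1 : ℂ) ^ n * ((n + 1 : ℕ) : ℂ) ^ (-s)
      = ∑ k ∈ Finset.range N, (((2 * k + 1 : ℕ) : ℂ) ^ (-s) - ((2 * k + 2 : ℕ) : ℂ) ^ (-s)) := by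
  induction N with
  | zero => simp
  | succ N ih =>
    rw [show 2 * (N + 1) = (2 * N + 1) + 1 by ring, Finset.sum_range_succ, Finset.sum_range_succ,
      ih, Finset.sum_range_succ]
    have h1 : (-1 : ℂ) ^ (2 * N) = 1 := by
      rw [pow_mul]; norm_num
    have h2 : (-1 : ℂ) ^ (2 * N + 1) = -1 := by
      rw [pow_succ, h1]; ring
    rw [h1, h2]
    have e1 : (2 * N + 1 + 1 : ℕ) = (2 * N + 2 : ℕ) := by ring
    have e2 : (2 * N + 1 : ℕ) = ((2 * N : ℕ) + 1 : ℕ) := by ring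
    rw [e1, ← e2]
    ring

open Complex in
lemma summable_eta {s : ℂ} (hs : 0 < s.re) :
    Summable (fun k : ℕ => (((2 * k + 1 : ℕ) : ℂ) ^ (-s) - ((2 * k + 2 : ℕ) : ℂ) ^ (-s))) := by
  apply Summable.of_norm
  apply Summable.of_nonneg_of_le (fun k => norm_nonneg _) (fun k => eta_term_bound' hs k)
  exact (summable_bound hs).mul_left _

open Complex in
lemma tendsto_eta {s : ℂ} (hs : 0 < s.re) :
    Tendsto (fun N : ℕ => ∑ n ∈ Finset.range N, (-1 : ℂ) ^ n * ((n + 1 : ℕ) : ℂ) ^ (-s))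
      atTop (nhds (etaAux s)) := by
  have hsum := (summable_eta hs).hasSum
  have heven : Tendsto (fun N : ℕ => ∑ n ∈ Finset.range (2 * N),
      (-1 : ℂ) ^ n * ((n + 1 : ℕ) : ℂ) ^ (-s)) atTop (nhds (etaAux s)) := by
    have h := hsum.tendsto_sum_nat
    refine h.congr fun N => ?_
    rw [even_partial]
  have hterm : Tendsto (fun n : ℕ => (-1 : ℂ) ^ n * ((n + 1 : ℕ) : ℂ) ^ (-s)) atTop (nhds 0) := by
    apply squeeze_zero_norm (a := fun n : ℕ => ((n : ℝ) + 1) ^ (-s.re))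
    · intro n
      rw [norm_mul, norm_pow, norm_neg, norm_one, one_pow, one_mul]
      rw [show ((n + 1 : ℕ) : ℂ) = (((n : ℝ) + 1 : ℝ) : ℂ) by push_cast; ring]
      rw [Complex.norm_cpow_eq_rpow_re_of_pos (by positivity)]
      simp
    · have h1 : Tendsto (fun x : ℝ => x ^ (-s.re)) atTop (nhds 0) :=
        tendsto_rpow_neg_atTop hs
      exact h1.comp (tendsto_atTop_add_const_right _ 1 tendsto_natCast_atTop_atTop)
  refine tendsto_even_odd (u := fun N : ℕ => ∑ n ∈ Finset.range N,
    (-1 : ℂ) ^ n * ((n + 1 : ℕ) : ℂ) ^ (-s)) heven ?_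
  have hsplit : ∀ N : ℕ, ∑ n ∈ Finset.range (2 * N + 1), (-1 : ℂ) ^ n * ((n + 1 : ℕ) : ℂ) ^ (-s)
      = (∑ n ∈ Finset.range (2 * N), (-1 : ℂ) ^ n * ((n + 1 : ℕ) : ℂ) ^ (-s))
        + (-1 : ℂ) ^ (2 * N) * ((2 * N + 1 : ℕ) : ℂ) ^ (-s) := by
    intro N; rw [Finset.sum_range_succ]
  have h2N : Tendsto (fun N : ℕ => 2 * N) atTop atTop := by
    apply tendsto_atTop_mono (g := fun N : ℕ => 2 * N) (f := fun N : ℕ => N)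
    · intro n; omega
    · exact tendsto_id
  have h2 : Tendsto (fun N : ℕ => (-1 : ℂ) ^ (2 * N) * ((2 * N + 1 : ℕ) : ℂ) ^ (-s))
      atTop (nhds 0) := hterm.comp h2N
  have hadd := heven.add h2
  rw [add_zero] at hadd
  exact hadd.congr fun N => (hsplit N).symm

open Complex in
lemma etaAux_eq_of_one_lt {s : ℂ} (hs : 1 < s.re) :
    etaAux s = (1 - (2 : ℂ) ^ (1 - s)) * riemannZeta s := by
  have hs0 : s ≠ 0 := Complex.ne_zero_of_one_lt_re hs
  have hsummable : Summable (fun n : ℕ => ((n + 1 : ℕ) : ℂ) ^ (-s)) := by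
    have h1 := (Complex.summable_one_div_nat_cpow (p := s)).mpr hs
    have h2 := (summable_nat_add_iff 1).mpr h1
    refine h2.congr fun n => ?_
    rw [cpow_neg, one_div]
  have hzeta : HasSum (fun n : ℕ => ((n + 1 : ℕ) : ℂ) ^ (-s)) (riemannZeta s) := by
    have h := hsummable.hasSum
    have e : ∑' n : ℕ, ((n + 1 : ℕ) : ℂ) ^ (-s) = riemannZeta s := by
      rw [zeta_eq_tsum_one_div_nat_add_one_cpow hs]
      apply tsum_congr
      intro n
      rw [cpow_neg, one_div]
      push_cast
      ring_nf
    rwa [e] at h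
  have hodd : HasSum (fun k : ℕ => ((2 * k + 2 : ℕ) : ℂ) ^ (-s))
      ((2 : ℂ) ^ (-s) * riemannZeta s) := by
    have he : (fun k : ℕ => ((2 * k + 2 : ℕ) : ℂ) ^ (-s))
        = fun k : ℕ => (2 : ℂ) ^ (-s) * ((k + 1 : ℕ) : ℂ) ^ (-s) := by
      funext k
      have e : ((2 * k + 2 : ℕ) : ℂ) = ((2 : ℝ) : ℂ) * (((k : ℝ) + 1 : ℝ) : ℂ) := by
        push_cast; ring
      rw [e, mul_cpow_ofReal_nonneg (by norm_num) (by positivity)]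
      push_cast
      ring_nf
    rw [he]
    exact hzeta.mul_left _
  have hevensummable : Summable (fun k : ℕ => ((2 * k + 1 : ℕ) : ℂ) ^ (-s)) := by
    exact hsummable.comp_injective (mul_right_injective₀ two_ne_zero)
  have heven := hevensummable.hasSum
  set x := ∑' k : ℕ, ((2 * k + 1 : ℕ) : ℂ) ^ (-s) with hx
  have hodd' : HasSum (fun k : ℕ => ((2 * k + 1 + 1 : ℕ) : ℂ) ^ (-s))
      ((2 : ℂ) ^ (-s) * riemannZeta s) := by
    have e : (fun k : ℕ => ((2 * k + 1 + 1 : ℕ) : ℂ) ^ (-s))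
        = fun k : ℕ => ((2 * k + 2 : ℕ) : ℂ) ^ (-s) := by
      funext k
      rw [show (2 * k + 1 + 1 : ℕ) = 2 * k + 2 from by omega]
    rw [e]; exact hodd
  have hsplit := HasSum.even_add_odd (f := fun n : ℕ => ((n + 1 : ℕ) : ℂ) ^ (-s)) heven hodd'
  have hxval : x + (2 : ℂ) ^ (-s) * riemannZeta s = riemannZeta s := hsplit.unique hzeta
  have hT : etaAux s = x - (2 : ℂ) ^ (-s) * riemannZeta s := (heven.sub hodd).tsum_eq
  have h2 : (2 : ℂ) ^ (1 - s) = 2 * (2 : ℂ) ^ (-s) := by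
    rw [show (1 - s : ℂ) = 1 + (-s) by ring, Complex.cpow_add _ _ two_ne_zero, Complex.cpow_one]
  have hxv : x = riemannZeta s - (2 : ℂ) ^ (-s) * riemannZeta s := by
    linear_combination hxval
  rw [hT, h2, hxv]
  ring

open Complex in
/-- `(s-1) ζ(s)` in an everywhere-on-`re > 0` analytic form. -/
noncomputable def zetaMulAux (s : ℂ) : ℂ :=
  ((s - 1) * completedRiemannZeta₀ s - (s - 1) / s + 1) * (Gammaℝ s)⁻¹

open Complex in
lemma zetaMulAux_eq {s : ℂ} (h0 : s ≠ 0) (h1 : s ≠ 1) :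
    zetaMulAux s = (s - 1) * riemannZeta s := by
  have h1s : (1 : ℂ) - s ≠ 0 := sub_ne_zero.mpr (Ne.symm h1)
  have e : (s - 1) / (1 - s) = -1 := by rw [div_eq_iff h1s]; ring
  rw [riemannZeta_def_of_ne_zero h0, completedRiemannZeta_eq, zetaMulAux, ← mul_div_assoc,
    div_eq_mul_inv]
  congr 1
  rw [mul_sub, mul_sub, mul_one_div, mul_one_div, e]
  ring

open Complex in
lemma diffOn_zetaMulAux : DifferentiableOn ℂ zetaMulAux {z : ℂ | 0 < z.re} := by
  intro s hs
  have h0 : s ≠ 0 := fun h => by simp [h] at hs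
  apply DifferentiableAt.differentiableWithinAt
  apply DifferentiableAt.mul
  · apply DifferentiableAt.add_const
    apply DifferentiableAt.sub
    · exact (differentiableAt_id.sub_const 1).mul differentiable_completedZeta₀.differentiableAt
    · exact (differentiableAt_id.sub_const 1).div differentiableAt_id h0
  · exact differentiable_Gammaℝ_inv.differentiableAt

open Complex in
lemma diffOn_etaAux : DifferentiableOn ℂ etaAux {z : ℂ | 0 < z.re} := by
  intro s hs
  have hσ : 0 < s.re := hs
  set V : Set ℂ := {z : ℂ | s.re / 2 < z.re} ∩ Metric.ball 0 (‖s‖ + 1) with hVdef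
  have hVo : IsOpen V :=
    ((continuous_re.isOpen_preimage _ isOpen_Ioi)).inter Metric.isOpen_ball
  have hsV : s ∈ V := by
    constructor
    · simp only [Set.mem_setOf_eq]; linarith
    · simp only [Metric.mem_ball, dist_zero_right]; linarith
  have hdiff : DifferentiableOn ℂ
      (fun w : ℂ => ∑' k : ℕ, (((2 * k + 1 : ℕ) : ℂ) ^ (-w) - ((2 * k + 2 : ℕ) : ℂ) ^ (-w)))
      V := by
    apply differentiableOn_tsum_of_summable_norm
      (u := fun k : ℕ => (‖s‖ + 1) * (2 * (k : ℝ) + 1) ^ (-(s.re / 2) - 1))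
    · exact (summable_bound (by linarith)).mul_left _
    case hU => exact hVo
    · intro k
      apply DifferentiableOn.sub
      · exact (differentiable_id.neg.const_cpow
          (Or.inl (Nat.cast_ne_zero.mpr (by omega)))).differentiableOn
      · exact (differentiable_id.neg.const_cpow
          (Or.inl (Nat.cast_ne_zero.mpr (by omega)))).differentiableOn
    · intro k w hw
      have hw1 : s.re / 2 < w.re := hw.1
      have hw2 : ‖w‖ < ‖s‖ + 1 := by
        have h := hw.2
        simpa only [Metric.mem_ball, dist_zero_right] using h
      have hb := eta_term_bound' (s := w) (by linarith) k
      refine hb.trans ?_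
      have hbase : (1 : ℝ) ≤ 2 * (k : ℝ) + 1 := by
        have hk : (0 : ℝ) ≤ (k : ℝ) := Nat.cast_nonneg k
        linarith
      exact mul_le_mul hw2.le (Real.rpow_le_rpow_of_exponent_le hbase (by linarith))
        (Real.rpow_nonneg (by linarith) _) (by positivity)
  exact (hdiff.differentiableAt (hVo.mem_nhds hsV)).differentiableWithinAt

open Complex in
lemma etaAux_eq {s : ℂ} (hs : 0 < s.re) (hs1 : s ≠ 1) :
    etaAux s = (1 - (2 : ℂ) ^ (1 - s)) * riemannZeta s := by
  set U : Set ℂ := {z : ℂ | 0 < z.re} with hUdef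
  have hUo : IsOpen U := continuous_re.isOpen_preimage _ isOpen_Ioi
  have hUc : Convex ℝ U := convex_halfSpace_re_gt 0
  set F : ℂ → ℂ := fun z => (z - 1) * etaAux z with hF
  set G : ℂ → ℂ := fun z => (1 - (2 : ℂ) ^ (1 - z)) * zetaMulAux z with hG
  have hFa : AnalyticOnNhd ℂ F U := by
    apply DifferentiableOn.analyticOnNhd _ hUo
    exact ((differentiable_id.sub_const 1).differentiableOn).mul diffOn_etaAux
  have hGa : AnalyticOnNhd ℂ G U := by
    apply DifferentiableOn.analyticOnNhd _ hUo
    apply DifferentiableOn.mul _ diffOn_zetaMulAux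
    apply DifferentiableOn.const_sub
    exact ((differentiable_id.const_sub 1).const_cpow (Or.inl two_ne_zero)).differentiableOn
  have h2U : (2 : ℂ) ∈ U := by simp [hUdef]
  have hnhds : {z : ℂ | 1 < z.re} ∈ nhds (2 : ℂ) :=
    (continuous_re.isOpen_preimage _ isOpen_Ioi).mem_nhds (by simp)
  have hFG : F =ᶠ[nhds (2 : ℂ)] G := by
    filter_upwards [hnhds] with z hz
    have hz0 : z ≠ 0 := Complex.ne_zero_of_one_lt_re hz
    have hz1 : z ≠ 1 := fun h => by rw [h] at hz; simp at hz
    simp only [hF, hG]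
    rw [etaAux_eq_of_one_lt hz, zetaMulAux_eq hz0 hz1]
    ring
  have heq := hFa.eqOn_of_preconnected_of_eventuallyEq hGa hUc.isPreconnected h2U hFG
  have hsU : s ∈ U := hs
  have hFGs := heq hsU
  simp only [hF, hG] at hFGs
  have hs0 : s ≠ 0 := fun h => by simp [h] at hs
  rw [zetaMulAux_eq hs0 hs1] at hFGs
  have hcancel : (s - 1) * etaAux s = (s - 1) * ((1 - (2 : ℂ) ^ (1 - s)) * riemannZeta s) := by
    rw [hFGs]; ring
  exact mul_left_cancel₀ (sub_ne_zero.mpr hs1) hcancel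

/-- For `Re s > 0` and `s ≠ 1`, the (conditionally convergent) alternating Dirichlet
series `∑_{n=1}^∞ (-1)^(n+1) n^(−s)` sums to `(1 − 2^(1−s)) ζ(s)`, where `ζ` is the
analytic continuation of the Riemann zeta function.  (With the summation index shifted
so that `n` runs over `ℕ`, the term for the positive integer `n + 1` is
`(-1)^n (n+1)^(−s)`.) -/
theorem alternating_dirichlet_extends_zeta (s : ℂ) (hs : 0 < s.re) (hs1 : s ≠ 1) :
    Tendsto (fun N : ℕ => ∑ n ∈ Finset.range N, (-1 : ℂ) ^ n * ((n + 1 : ℕ) : ℂ) ^ (-s))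
      atTop (nhds ((1 - (2 : ℂ) ^ (1 - s)) * riemannZeta s)) := by
  rw [← etaAux_eq hs hs1]
  exact tendsto_eta hs
end

section
/- (Weak form of the prime number theorem.) There exists a constant c₁ > 1 such that for every integer n > 1, 1/c₁ < p_n / (n log n) < c₁, where p_n denotes the n-th prime number in increasing order (p₁ = 2, p₂ = 3, p₃ = 5, …). -/
open Filter

section WeakPNTAux

open Finset

lemma centralBinom_le_pow (m : ℕ) (hm : 0 < m) :
    Nat.centralBinom m ≤ (2*m) ^ (Nat.count Nat.Prime (2*m+1)) := by
  rw [Nat.count_eq_card_filter_range]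
  conv_lhs => rw [← Nat.prod_pow_factorization_centralBinom m]
  rw [← Finset.prod_subset (Finset.filter_subset Nat.Prime (Finset.range (2*m+1)))
      (fun x hx hnx => by
        have : ¬ x.Prime := fun hp => hnx (Finset.mem_filter.2 ⟨hx, hp⟩)
        simp [Nat.factorization_eq_zero_of_not_prime _ this])]
  apply Finset.prod_le_pow_card
  intro p hp
  rw [Nat.centralBinom]
  exact Nat.pow_factorization_choose_le (by omega)

lemma one_le_log_four : (1:ℝ) ≤ Real.log 4 := by
  rw [Real.le_log_iff_exp_le (by norm_num)]
  exact Real.exp_one_lt_d9.le.trans (by norm_num)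

lemma log_four_le_two : Real.log 4 ≤ 2 := by
  rw [Real.log_le_iff_le_exp (by norm_num)]
  have h := Real.add_one_le_exp (1:ℝ)
  calc (4:ℝ) = 2*2 := by norm_num
    _ ≤ Real.exp 1 * Real.exp 1 := by nlinarith
    _ = Real.exp 2 := by rw [← Real.exp_add]; norm_num

lemma nth_prime_upper (n : ℕ) (hn : 9 ≤ n) :
    (Nat.nth Nat.Prime (n-1) : ℝ) ≤ 9 * n * Real.log n := by
  set L := Real.log n with hL
  have hn' : (9:ℝ) ≤ n := by exact_mod_cast hn
  have hL1 : 1 ≤ L := by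
    rw [hL, ← Real.log_exp 1]
    exact Real.log_le_log (Real.exp_pos 1) (Real.exp_one_lt_d9.le.trans (by linarith))
  set m := ⌈(4:ℝ) * n * L⌉₊ with hm
  have hnL : (9:ℝ) ≤ n * L := by nlinarith
  have hmlb : (4:ℝ)*n*L ≤ m := Nat.le_ceil _
  have hmub : (m:ℝ) ≤ 4*(n*L) + 1 := by
    have := Nat.ceil_lt_add_one (show (0:ℝ) ≤ 4*n*L by nlinarith)
    rw [← hm] at this; nlinarith
  have hm4 : 4 ≤ m := by
    have : (4:ℝ) ≤ m := by nlinarith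
    exact_mod_cast this
  have hcount : n ≤ Nat.count Nat.Prime (2*m+1) := by
    by_contra hc
    push_neg at hc
    set k := Nat.count Nat.Prime (2*m+1) with hk
    have h2 : (4:ℕ)^m < m * (2*m)^k :=
      lt_of_lt_of_le (Nat.four_pow_lt_mul_centralBinom m hm4)
        (Nat.mul_le_mul_left _ (centralBinom_le_pow m (by omega)))
    have h3 : (4:ℝ)^m < (m:ℝ) * ((2*m:ℕ):ℝ)^k := by exact_mod_cast h2
    have hmpos : (0:ℝ) < m := by positivity
    have h2m : (0:ℝ) < ((2*m:ℕ):ℝ) := by positivity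
    have h4 : (m:ℝ) * Real.log 4 < Real.log m + k * Real.log ((2*m:ℕ):ℝ) := by
      have := Real.log_lt_log (by positivity) h3
      rwa [Real.log_pow, Real.log_mul (ne_of_gt hmpos) (by positivity), Real.log_pow] at this
    -- bounds
    have f2 : Real.log m ≤ Real.log ((2*m:ℕ):ℝ) := by
      apply Real.log_le_log hmpos; push_cast; linarith
    have h2mn3 : ((2*m:ℕ):ℝ) ≤ (n:ℝ)^3 := by
      push_cast
      have hLn : L ≤ (n:ℝ) - 1 := Real.log_le_sub_one_of_pos (by linarith)
      have e1 : (n:ℝ)*L ≤ (n:ℝ)*((n:ℝ)-1) := mul_le_mul_of_nonneg_left hLn (by linarith)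
      have e2 : 9*(n:ℝ)^2 ≤ (n:ℝ)^3 := by nlinarith [sq_nonneg (n:ℝ)]
      nlinarith
    have f3 : Real.log ((2*m:ℕ):ℝ) ≤ 3 * L := by
      calc Real.log ((2*m:ℕ):ℝ) ≤ Real.log ((n:ℝ)^3) := Real.log_le_log h2m h2mn3
        _ = 3 * L := by rw [hL, Real.log_pow]; norm_num
    have f4 : (k:ℝ) ≤ (n:ℝ) - 1 := by
      have : k + 1 ≤ n := hc
      have := (Nat.cast_le (α := ℝ)).2 this
      push_cast at this; linarith
    have f5 : (0:ℝ) ≤ Real.log ((2*m:ℕ):ℝ) := Real.log_nonneg (by exact_mod_cast (show (1:ℕ) ≤ 2*m by omega))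
    have f6 := one_le_log_four
    have h5 : (k:ℝ) * Real.log ((2*m:ℕ):ℝ) ≤ ((n:ℝ)-1) * Real.log ((2*m:ℕ):ℝ) :=
      mul_le_mul_of_nonneg_right f4 f5
    have h6 : (n:ℝ) * Real.log ((2*m:ℕ):ℝ) ≤ (n:ℝ) * (3*L) :=
      mul_le_mul_of_nonneg_left f3 (by positivity)
    have h7 : (m:ℝ) ≤ (m:ℝ) * Real.log 4 := le_mul_of_one_le_right (le_of_lt hmpos) f6
    nlinarith
  have hlt : Nat.nth Nat.Prime (n-1) < 2*m+1 := by
    apply Nat.nth_lt_of_lt_count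
    omega
  have : (Nat.nth Nat.Prime (n-1) : ℝ) ≤ 2*(m:ℝ) := by
    have : Nat.nth Nat.Prime (n-1) ≤ 2*m := by omega
    exact_mod_cast this
  calc (Nat.nth Nat.Prime (n-1) : ℝ) ≤ 2*(m:ℝ) := this
    _ ≤ 8*(n*L) + 2 := by linarith
    _ ≤ 9 * n * L := by nlinarith

lemma log_four_le_two' : Real.log 4 ≤ 2 := by
  rw [Real.log_le_iff_le_exp (by norm_num)]
  have h := Real.add_one_le_exp (1:ℝ)
  calc (4:ℝ) = 2*2 := by norm_num
    _ ≤ Real.exp 1 * Real.exp 1 := by nlinarith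
    _ = Real.exp 2 := by rw [← Real.exp_add]; norm_num

lemma nth_prime_lower (n : ℕ) (hn : 64 ≤ n) :
    (n:ℝ) * Real.log n ≤ 12 * (Nat.nth Nat.Prime (n-1) : ℝ) := by
  set L := Real.log n with hL
  have hn' : (64:ℝ) ≤ n := by exact_mod_cast hn
  have hnpos : (0:ℝ) < n := by linarith
  have hL1 : 1 ≤ L := by
    rw [hL, ← Real.log_exp 1]
    exact Real.log_le_log (Real.exp_pos 1) (Real.exp_one_lt_d9.le.trans (by linarith))
  set p := Nat.nth Nat.Prime (n-1) with hp
  have hpp : p.Prime := Nat.prime_nth_prime (n-1)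
  have hcount : Nat.count Nat.Prime (p+1) = n := by
    rw [Nat.count_succ, if_pos hpp, hp, Nat.count_nth_of_infinite Nat.infinite_setOf_prime]
    omega
  set s := ⌊Real.sqrt ((n:ℝ) * L)⌋₊ with hs
  -- real bounds on s
  have hnL0 : (0:ℝ) ≤ (n:ℝ) * L := by positivity
  have hs_up : (s:ℝ) ≤ Real.sqrt ((n:ℝ)*L) := Nat.floor_le (Real.sqrt_nonneg _)
  have hs_lo : Real.sqrt ((n:ℝ)*L) < (s:ℝ) + 1 := Nat.lt_floor_add_one _
  have hsqn : Real.sqrt (n:ℝ) * Real.sqrt (n:ℝ) = (n:ℝ) := Real.mul_self_sqrt (le_of_lt hnpos)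
  have h8 : (8:ℝ) ≤ Real.sqrt (n:ℝ) := by
    nlinarith [Real.sqrt_nonneg (n:ℝ)]
  have hL2sqrt : L ≤ 2 * Real.sqrt (n:ℝ) := by
    have h1 : L = Real.log (Real.sqrt (n:ℝ) * Real.sqrt (n:ℝ)) := by rw [hsqn]
    have h2 : Real.log (Real.sqrt (n:ℝ)) ≤ Real.sqrt (n:ℝ) - 1 :=
      Real.log_le_sub_one_of_pos (by nlinarith)
    rw [h1, Real.log_mul (by nlinarith) (by nlinarith)]
    linarith
  have hLn4 : L ≤ (n:ℝ)/4 := by nlinarith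
  have hsqrt_half : Real.sqrt ((n:ℝ)*L) ≤ (n:ℝ)/2 := by
    have h1 : (n:ℝ)*L ≤ ((n:ℝ)/2)^2 := by nlinarith
    calc Real.sqrt ((n:ℝ)*L) ≤ Real.sqrt (((n:ℝ)/2)^2) := Real.sqrt_le_sqrt h1
      _ = (n:ℝ)/2 := Real.sqrt_sq (by linarith)
  have hs_half : (s:ℝ) + 1 ≤ 2*(n:ℝ)/3 := by linarith
  have hs_le_n : s + 1 ≤ n := by
    have : ((s:ℝ)) + 1 ≤ (n:ℝ) := by linarith
    exact_mod_cast this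
  -- combinatorial key
  have key : (s+1)^(n - (s+1)) ≤ 4^p := by
    set A := (Finset.range (p+1)).filter Nat.Prime with hA
    set T := A.filter (fun q => s < q) with hT
    have hcardA : A.card = n := by
      rw [hA, ← Nat.count_eq_card_filter_range, hcount]
    have hTsub : T ⊆ A := Finset.filter_subset _ _
    have hcardsmall : (A \ T).card ≤ s+1 := by
      calc (A \ T).card ≤ (Finset.range (s+1)).card := by
            apply Finset.card_le_card
            intro x hx
            rw [Finset.mem_sdiff] at hx
            rw [Finset.mem_range]
            by_contra hc
            push_neg at hc
            exact hx.2 (Finset.mem_filter.2 ⟨hx.1, by omega⟩)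
        _ = s + 1 := Finset.card_range _
    have hcardT : n - (s+1) ≤ T.card := by
      have := Finset.card_sdiff_add_card_eq_card hTsub
      omega
    calc (s+1)^(n-(s+1)) ≤ (s+1)^T.card := Nat.pow_le_pow_right (by omega) hcardT
      _ ≤ ∏ q ∈ T, q := Finset.pow_card_le_prod T _ _ (fun x hx => by
          rw [hT, Finset.mem_filter] at hx; omega)
      _ ≤ ∏ q ∈ A, q := Finset.prod_le_prod_of_subset_of_one_le' hTsub
          (fun i hi _ => by
            rw [hA, Finset.mem_filter] at hi
            exact hi.2.one_lt.le.trans' (by norm_num))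
      _ = primorial p := rfl
      _ ≤ 4^p := primorial_le_4_pow p
  -- take logs
  have key' : ((n:ℝ) - ((s:ℝ)+1)) * Real.log ((s:ℝ)+1) ≤ (p:ℝ) * Real.log 4 := by
    have hcast : (((s+1:ℕ)):ℝ)^(n-(s+1)) ≤ (4:ℝ)^p := by exact_mod_cast key
    have h1 := Real.log_le_log (by positivity) hcast
    rw [Real.log_pow, Real.log_pow] at h1
    have h2 : ((n - (s+1) : ℕ):ℝ) = (n:ℝ) - ((s:ℝ)+1) := by
      rw [Nat.cast_sub hs_le_n]; push_cast; ring
    rw [h2] at h1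
    convert h1 using 3 <;> push_cast <;> ring
  have hlog_s : L/2 ≤ Real.log ((s:ℝ)+1) := by
    have h1 : Real.log (Real.sqrt ((n:ℝ)*L)) ≤ Real.log ((s:ℝ)+1) :=
      Real.log_le_log (Real.sqrt_pos.2 (by nlinarith)) (le_of_lt hs_lo)
    rw [Real.log_sqrt hnL0] at h1
    have h2 : L ≤ Real.log ((n:ℝ)*L) := by
      rw [hL]
      apply Real.log_le_log hnpos
      nlinarith
    linarith
  have hfrac : (n:ℝ)/3 ≤ (n:ℝ) - ((s:ℝ)+1) := by linarith
  have hmul : (n:ℝ)/3 * (L/2) ≤ ((n:ℝ) - ((s:ℝ)+1)) * Real.log ((s:ℝ)+1) :=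
    mul_le_mul hfrac hlog_s (by linarith) (by linarith)
  have hp2 : (p:ℝ) * Real.log 4 ≤ (p:ℝ) * 2 :=
    mul_le_mul_of_nonneg_left log_four_le_two' (by positivity)
  linarith

end WeakPNTAux

/-- Weak form of the prime number theorem: there is a constant `c₁ > 1` such that
`1/c₁ < pₙ/(n log n) < c₁` for every `n > 1`, where `pₙ` is the `n`-th prime
(`p₁ = 2`, `p₂ = 3`, `p₃ = 5`, …, so `pₙ = Nat.nth Nat.Prime (n − 1)`). -/
theorem weak_prime_number_theorem :
    ∃ c₁ : ℝ, 1 < c₁ ∧ ∀ n : ℕ, 1 < n →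
      1 / c₁ < (Nat.nth Nat.Prime (n - 1) : ℝ) / ((n : ℝ) * Real.log n) ∧
      (Nat.nth Nat.Prime (n - 1) : ℝ) / ((n : ℝ) * Real.log n) < c₁ := by
  set F : ℕ → ℝ := fun k => (Nat.nth Nat.Prime (k-1) : ℝ) / ((k:ℝ) * Real.log k) with hF
  have hden : ∀ k : ℕ, 2 ≤ k → 0 < (k:ℝ) * Real.log k := by
    intro k hk
    have h2 : (2:ℝ) ≤ (k:ℝ) := by exact_mod_cast hk
    have hlog := Real.log_pos (by linarith : (1:ℝ) < (k:ℝ))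
    nlinarith
  have hnum : ∀ k : ℕ, 0 < (Nat.nth Nat.Prime (k-1) : ℝ) := by
    intro k
    exact_mod_cast (Nat.prime_nth_prime (k-1)).pos
  have hFpos : ∀ k : ℕ, 2 ≤ k → 0 < F k := fun k hk => div_pos (hnum k) (hden k hk)
  set S : ℝ := ∑ k ∈ Finset.Ico 2 64, (F k + (F k)⁻¹) with hS
  have hSnonneg : 0 ≤ S := Finset.sum_nonneg (fun k hk => by
    have := hFpos k (Finset.mem_Ico.1 hk).1
    positivity)
  refine ⟨13 + S, by linarith, ?_⟩
  intro n hn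
  have hFn := hFpos n hn
  have hdn := hden n hn
  by_cases h64 : 64 ≤ n
  · have hu := nth_prime_upper n (by omega)
    have hl := nth_prime_lower n h64
    constructor
    · have h1 : (1:ℝ)/12 ≤ F n := by
        rw [hF, le_div_iff₀ hdn]
        linarith
      have h2 : (1:ℝ)/(13+S) ≤ 1/13 := by
        apply one_div_le_one_div_of_le <;> linarith
      linarith
    · have h1 : F n ≤ 9 := by
        rw [hF, div_le_iff₀ hdn]
        calc (Nat.nth Nat.Prime (n-1) : ℝ) ≤ 9 * n * Real.log n := hu
          _ = 9 * ((n:ℝ) * Real.log n) := by ring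
      linarith
  · have hmem : n ∈ Finset.Ico 2 64 := Finset.mem_Ico.2 ⟨hn, by omega⟩
    have hterm : F n + (F n)⁻¹ ≤ S :=
      Finset.single_le_sum (f := fun k => F k + (F k)⁻¹)
        (fun k hk => by
          have := hFpos k (Finset.mem_Ico.1 hk).1
          positivity) hmem
    have hinv : 0 < (F n)⁻¹ := by positivity
    constructor
    · have h1 : (F n)⁻¹ < 13 + S := by linarith
      have h2 : (1:ℝ)/(13+S) < 1/(F n)⁻¹ := one_div_lt_one_div_of_lt hinv h1
      rw [hF] at h2; rw [one_div]; simpa [inv_inv] using h2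
    · linarith
end
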